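/- arXiv:2511.20967 — 4 statements merged into one kernel-verified Lean document; each statement's English description precedes it below -/
import Mathlib

section
/- Let k ≥ 1, 1 ≤ i ≤ k+1, 1 ≤ j ≤ k+1. Then the set of reverse complements of the patterns in M_{k,j,i} is exactly M_{k,k+2-j,k+2-i}; that is, {q^rc : q ∈ M_{k,j,i}} = M_{k,k+2-j,k+2-i}. In particular, σ_{k,j,v}^rc = σ_{k,k+2-j,k+2-v} for all 1 ≤ v ≤ k+1. -/
/-- A permutation `p` of length `n` contains the pattern `q` of length `m` if some
strictly increasing choice of positions realizes the same relative order. -/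
def Contains {n m : ℕ} (p : Equiv.Perm (Fin n)) (q : Equiv.Perm (Fin m)) : Prop :=
  ∃ f : Fin m → Fin n, StrictMono f ∧ ∀ a b : Fin m, q a < q b ↔ p (f a) < p (f b)

/-- The set of permutations of length `n` avoiding every member of `Q`. -/
def Av (n : ℕ) (Q : Set (Σ m, Equiv.Perm (Fin m))) : Set (Equiv.Perm (Fin n)) :=
  {p | ∀ q ∈ Q, ¬ Contains p q.2}

/-- `sigmaP k j v` (for `1 ≤ j, v ≤ k+1`): the permutation of length `k+1` whose
`j`-th entry (1-indexed) is `v`, and whose remaining `k` entries, read left to right,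
are the values of `{1,…,k+1} \ {v}` in increasing order. -/
def sigmaP (k j v : ℕ) : Equiv.Perm (Fin (k+1)) :=
  (finSuccEquiv' ⟨(j-1) % (k+1), Nat.mod_lt _ (Nat.succ_pos k)⟩).trans
    (finSuccEquiv' ⟨(v-1) % (k+1), Nat.mod_lt _ (Nat.succ_pos k)⟩).symm

/-- The almost distant monotone pattern `M_{k,j,i}`: the `k` permutations
`σ_{k,j,v}` for `1 ≤ v ≤ k+1`, `v ≠ i`. -/
def MSet (k j i : ℕ) : Set (Σ m, Equiv.Perm (Fin m)) :=
  {q | ∃ v, 1 ≤ v ∧ v ≤ k + 1 ∧ v ≠ i ∧ q = ⟨k + 1, sigmaP k j v⟩}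

/-- The reverse complement of a permutation: `q^rc(s) = t+1-q(t+1-s)` (1-indexed). -/
def revComp {t : ℕ} (q : Equiv.Perm (Fin t)) : Equiv.Perm (Fin t) :=
  (Fin.revPerm.trans q).trans Fin.revPerm

lemma revComp_trans {k : ℕ} (p q : Fin (k+1)) :
    revComp ((finSuccEquiv' p).trans (finSuccEquiv' q).symm)
      = (finSuccEquiv' p.rev).trans (finSuccEquiv' q.rev).symm := by
  ext a
  simp only [revComp, Equiv.trans_apply, Fin.revPerm_apply]
  by_cases h : a = p.rev
  · subst h
    rw [Fin.rev_rev, finSuccEquiv'_at, finSuccEquiv'_at]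
    simp
  · have h' : a.rev ≠ p := fun hc => h (by rw [← hc, Fin.rev_rev])
    obtain ⟨z, hz⟩ := Fin.exists_succAbove_eq h'
    have ha : a = (p.succAbove z).rev := by rw [hz, Fin.rev_rev]
    subst ha
    rw [Fin.rev_rev, Fin.rev_succAbove, finSuccEquiv'_succAbove,
      finSuccEquiv'_succAbove, finSuccEquiv'_symm_some, finSuccEquiv'_symm_some,
      Fin.rev_succAbove]

lemma rev_mk {k x : ℕ} (hx1 : 1 ≤ x) (hx2 : x ≤ k + 1) :
    (⟨(x-1) % (k+1), Nat.mod_lt _ (Nat.succ_pos k)⟩ : Fin (k+1)).rev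
      = ⟨(k + 2 - x - 1) % (k+1), Nat.mod_lt _ (Nat.succ_pos k)⟩ := by
  have h1 : (x-1) % (k+1) = x-1 := Nat.mod_eq_of_lt (by omega)
  have h2 : (k+2-x-1) % (k+1) = k+2-x-1 := Nat.mod_eq_of_lt (by omega)
  ext
  simp only [Fin.val_rev, h1, h2]
  omega

lemma revComp_sigmaP (k j v : ℕ) (hj1 : 1 ≤ j) (hj2 : j ≤ k + 1)
    (hv1 : 1 ≤ v) (hv2 : v ≤ k + 1) :
    revComp (sigmaP k j v) = sigmaP k (k + 2 - j) (k + 2 - v) := by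
  unfold sigmaP
  rw [revComp_trans, rev_mk hj1 hj2, rev_mk hv1 hv2]

/-- The set of reverse complements of the patterns in `M_{k,j,i}` is exactly
`M_{k,k+2-j,k+2-i}`; in particular `σ_{k,j,v}^rc = σ_{k,k+2-j,k+2-v}`. -/
theorem stmt1 (k i j : ℕ) (hk : 1 ≤ k) (hi1 : 1 ≤ i) (hi2 : i ≤ k + 1)
    (hj1 : 1 ≤ j) (hj2 : j ≤ k + 1) :
    ((fun q : Σ m, Equiv.Perm (Fin m) =>
        (⟨q.1, revComp q.2⟩ : Σ m, Equiv.Perm (Fin m))) '' MSet k j i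
      = MSet k (k + 2 - j) (k + 2 - i)) ∧
    (∀ v, 1 ≤ v → v ≤ k + 1 →
      revComp (sigmaP k j v) = sigmaP k (k + 2 - j) (k + 2 - v)) := by
  constructor
  · ext q
    simp only [Set.mem_image, MSet, Set.mem_setOf_eq]
    constructor
    · rintro ⟨_, ⟨v, hv1, hv2, hvi, rfl⟩, rfl⟩
      exact ⟨k + 2 - v, by omega, by omega, by omega,
        by simp [revComp_sigmaP k j v hj1 hj2 hv1 hv2]⟩
    · rintro ⟨w, hw1, hw2, hwi, rfl⟩
      refine ⟨⟨k + 1, sigmaP k j (k + 2 - w)⟩,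
        ⟨k + 2 - w, by omega, by omega, by omega, rfl⟩, ?_⟩
      have : k + 2 - (k + 2 - w) = w := by omega
      simp [revComp_sigmaP k j (k + 2 - w) hj1 hj2 (by omega) (by omega), this]
  · exact fun v hv1 hv2 => revComp_sigmaP k j v hj1 hj2 hv1 hv2
end

section
/- Let k ≥ 2, 1 ≤ i ≤ k−1, and let p be a permutation of length n that avoids every pattern in M_{k,i+1,i+1}. Say a position x of p 'acts as the m-th term' (1 ≤ m ≤ k) if there is a strictly increasing sequence of positions x_1 < x_2 < ⋯ < x_k with x_m = x such that p(x_1) < p(x_2) < ⋯ < p(x_k). Let B be the set of positions that act as the (i+1)-st term of such an increasing subsequence of length k, and let A be the set of positions not in B that act as the i-th term. Then for each b ∈ B there is at most one a ∈ A such that some increasing subsequence of length k in p has a as its i-th term and b as its (i+1)-st term. -/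
/-- Position `x` of `p` acts as the `m`-th term (1-indexed) of an increasing
subsequence of length `k` in `p`. -/
def ActsAs {n : ℕ} (p : Equiv.Perm (Fin n)) (k m : ℕ) (x : Fin n) : Prop :=
  ∃ g : Fin k → Fin n, StrictMono g ∧ StrictMono (fun t => p (g t)) ∧
    ∃ hm : m - 1 < k, g ⟨m - 1, hm⟩ = x

/-- Positions `a` and `b` act as the `m`-th and `(m+1)`-st terms (1-indexed) of a
common increasing subsequence of length `k` in `p`. -/
def ActsAsPair {n : ℕ} (p : Equiv.Perm (Fin n)) (k m : ℕ) (a b : Fin n) : Prop :=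
  ∃ g : Fin k → Fin n, StrictMono g ∧ StrictMono (fun t => p (g t)) ∧
    ∃ (hm : m - 1 < k) (hm' : m < k), g ⟨m - 1, hm⟩ = a ∧ g ⟨m, hm'⟩ = b

open Equiv

theorem sigmaP_succ_succ (k : ℕ) (j v : Fin (k + 1)) :
    sigmaP k (j + 1) (v + 1) = (finSuccEquiv' j).trans (finSuccEquiv' v).symm := by
  simp only [sigmaP, Nat.add_sub_cancel, Nat.mod_eq_of_lt j.isLt, Nat.mod_eq_of_lt v.isLt]

theorem Fin.exists_castSucc_lt_iff {α : Type*} [Preorder α] :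
    ∀ {k : ℕ} {u : Fin k → α}, Monotone u → ∀ c : α,
      ∃ v : Fin (k + 1), ∀ t : Fin k, t.castSucc < v ↔ u t < c
  | 0, _, _, _ => ⟨0, fun t => t.elim0⟩
  | k + 1, u, hu, c => by
    by_cases h0 : u 0 < c
    · obtain ⟨v, hv⟩ := Fin.exists_castSucc_lt_iff (hu.comp (Fin.strictMono_succ.monotone)) c
      refine ⟨v.succ, Fin.cases (by simpa using h0) fun s => ?_⟩
      simpa [← Fin.succ_castSucc] using hv s
    · exact ⟨0, fun t => by
        simpa using fun h => h0 ((hu (Fin.zero_le t)).trans_lt h)⟩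

theorem sigmaP_lt_sigmaP_iff {α : Type*} [LinearOrder α] {k : ℕ} {w : Fin (k + 1) → α}
    (hw : Function.Injective w) {j v : Fin (k + 1)}
    (hmono : StrictMono (w ∘ j.succAbove))
    (hv : ∀ t : Fin k, t.castSucc < v ↔ w (j.succAbove t) < w j) (a b : Fin (k + 1)) :
    sigmaP k (j + 1) (v + 1) a < sigmaP k (j + 1) (v + 1) b ↔ w a < w b := by
  have hne (t : Fin k) : w j ≠ w (j.succAbove t) := hw.ne (Fin.succAbove_ne j t).symm
  rw [sigmaP_succ_succ]
  cases a using Fin.succAboveCases j <;> cases b using Fin.succAboveCases j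
  · simp
  · rename_i t
    simp only [Equiv.trans_apply, finSuccEquiv'_at, finSuccEquiv'_succAbove,
      finSuccEquiv'_symm_none, finSuccEquiv'_symm_some, Fin.lt_succAbove_iff_le_castSucc]
    rw [← not_lt, hv, not_lt, (hne t).le_iff_lt]
  · rename_i t
    simp [finSuccEquiv'_succAbove, Fin.succAbove_lt_iff_castSucc_lt, hv]
  · simpa [finSuccEquiv'_succAbove] using hmono.lt_iff_lt.symm

theorem exists_contains_sigmaP {n k : ℕ} (p : Perm (Fin n)) {f : Fin (k + 1) → Fin n}
    (hf : StrictMono f) (j : Fin (k + 1)) (hmono : StrictMono (p ∘ f ∘ j.succAbove)) :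
    ∃ v : Fin (k + 1), (∀ t : Fin k, t.castSucc < v ↔ p (f (j.succAbove t)) < p (f j)) ∧
      Contains p (sigmaP k (j + 1) (v + 1)) := by
  obtain ⟨v, hv⟩ := Fin.exists_castSucc_lt_iff hmono.monotone (p (f j))
  exact ⟨v, hv, f, hf, sigmaP_lt_sigmaP_iff (p.injective.comp hf.injective) hmono hv⟩

section Splice

variable {α β : Type*} {m : ℕ}

def spliceAt (g g' : Fin (m + 1) → α) (j : Fin m) : Fin (m + 1) → α :=
  fun t => if t ≤ j.castSucc then g t else g' t

theorem spliceAt_castSucc (g g' : Fin (m + 1) → α) (j : Fin m) :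
    spliceAt g g' j j.castSucc = g j.castSucc :=
  if_pos le_rfl

theorem spliceAt_succ (g g' : Fin (m + 1) → α) (j : Fin m) :
    spliceAt g g' j j.succ = g' j.succ :=
  if_neg Fin.castSucc_lt_succ.not_ge

theorem comp_spliceAt (φ : α → β) (g g' : Fin (m + 1) → α) (j : Fin m) :
    φ ∘ spliceAt g g' j = spliceAt (φ ∘ g) (φ ∘ g') j :=
  funext fun _ => apply_ite φ _ _ _

variable [Preorder α] {g g' : Fin (m + 1) → α} {j : Fin m}

theorem strictMono_spliceAt (hg : StrictMono g) (hg' : StrictMono g')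
    (hj : g j.castSucc < g' j.succ) : StrictMono (spliceAt g g' j) := by
  intro s t hst
  unfold spliceAt
  split_ifs with hs ht ht
  · exact hg hst
  · exact (hg.monotone hs).trans_lt (hj.trans_le (hg'.monotone (Fin.castSucc_lt_iff_succ_le.1
      (not_le.1 ht))))
  · exact absurd (hst.le.trans ht) hs
  · exact hg' hst

theorem strictMono_insertNth_spliceAt (hg : StrictMono g) (hg' : StrictMono g') {x : α}
    (hx : g j.castSucc < x) (hx' : x < g' j.succ) :
    StrictMono (j.castSucc.succ.insertNth (α := fun _ => α) x (spliceAt g g' j)) :=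
  Fin.strictMono_insertNth (strictMono_spliceAt hg hg' (hx.trans hx')) j x
    (by rwa [spliceAt_castSucc]) (by rwa [spliceAt_succ])

end Splice

section Pairs

variable {n m : ℕ} {p : Perm (Fin n)} {j : Fin m} {a a' b : Fin n}

theorem ActsAsPair.exists_castSucc_succ (h : ActsAsPair p (m + 1) (j + 1) a b) :
    ∃ g : Fin (m + 1) → Fin n, StrictMono g ∧ StrictMono (p ∘ g) ∧ g j.castSucc = a ∧
      g j.succ = b := by
  obtain ⟨g, hg, hpg, _, _, ha, hb⟩ := h
  exact ⟨g, hg, hpg, ha, hb⟩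

theorem not_lt_of_actsAsPair (hp : p ∈ Av n (MSet (m + 1) (j + 1 + 1) (j + 1 + 1)))
    (ha' : ¬ ActsAs p (m + 1) (j + 1 + 1) a') (h : ActsAsPair p (m + 1) (j + 1) a b)
    (h' : ActsAsPair p (m + 1) (j + 1) a' b) : ¬ a < a' := by
  intro hlt
  obtain ⟨g, hg, hpg, rfl, rfl⟩ := h.exists_castSucc_succ
  obtain ⟨g', hg', hpg', rfl, hb⟩ := h'.exists_castSucc_succ
  set I : Fin (m + 2) := j.castSucc.succ
  set f := I.insertNth (α := fun _ => Fin n) (g' j.castSucc) (spliceAt g g' j)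
  have hf : StrictMono f := strictMono_insertNth_spliceAt hg hg' hlt (hg' Fin.castSucc_lt_succ)
  have hpf : p ∘ f = I.insertNth (α := fun _ => Fin n) (p (g' j.castSucc))
      (spliceAt (p ∘ g) (p ∘ g') j) := by
    rw [← comp_spliceAt]
    funext t
    cases t using Fin.succAboveCases I <;> simp [f]
  rcases (p.injective.ne hlt.ne).lt_or_gt with hval | hval
  · refine ha' ⟨Fin.init f, hf.comp Fin.strictMono_castSucc, ?_, j.succ.isLt, ?_⟩
    · have := strictMono_insertNth_spliceAt hpg hpg' hval (hpg' Fin.castSucc_lt_succ)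
      exact (hpf ▸ this).comp Fin.strictMono_castSucc
    · exact Fin.insertNth_apply_same _ _ _
  · obtain ⟨v, hv, hcont⟩ := exists_contains_sigmaP p hf I (by
      rw [← Function.comp_assoc, hpf, Fin.insertNth_comp_succAbove]
      exact strictMono_spliceAt hpg hpg'
        ((hpg Fin.castSucc_lt_succ).trans_eq (congrArg p hb.symm)))
    refine hp _ ⟨v + 1, by omega, by omega, fun hvI => ?_, rfl⟩ hcont
    have := (hv j.castSucc).1 (by simp [Fin.lt_def, Nat.succ_injective hvI])
    simp only [f, Fin.insertNth_apply_succAbove, Fin.insertNth_apply_same, spliceAt_castSucc]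
      at this
    exact this.not_gt hval

end Pairs

theorem stmt5_general (k i n : ℕ) (hi1 : 1 ≤ i)
    (p : Equiv.Perm (Fin n)) (hp : p ∈ Av n (MSet k (i + 1) (i + 1)))
    (B A : Set (Fin n))
    (hB : B = {x | ActsAs p k (i + 1) x})
    (hA : A = {x | x ∉ B ∧ ActsAs p k i x}) :
    ∀ b ∈ B, ∀ a ∈ A, ∀ a' ∈ A,
      ActsAsPair p k i a b → ActsAsPair p k i a' b → a = a' := by
  subst hB hA
  intro b _ a ha a' ha' h h'
  have hik : i < k := by obtain ⟨_, _, _, _, hik, -⟩ := h; exact hik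
  obtain ⟨j, rfl⟩ : ∃ j, i = j + 1 := ⟨i - 1, by omega⟩
  obtain ⟨m, rfl⟩ : ∃ m, k = m + 1 := ⟨k - 1, by omega⟩
  lift j to Fin m using by omega
  exact le_antisymm (not_lt.1 (not_lt_of_actsAsPair hp ha.1 h' h))
    (not_lt.1 (not_lt_of_actsAsPair hp ha'.1 h h'))

/-- If `p` avoids `M_{k,i+1,i+1}` then each `b ∈ B` has at most one `a ∈ A` such that
some increasing subsequence of length `k` has `a` as its `i`-th term and `b` as its
`(i+1)`-st term. -/
theorem stmt5 (k i n : ℕ) (hk : 2 ≤ k) (hi1 : 1 ≤ i) (hi2 : i ≤ k - 1)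
    (p : Equiv.Perm (Fin n)) (hp : p ∈ Av n (MSet k (i + 1) (i + 1)))
    (B A : Set (Fin n))
    (hB : B = {x | ActsAs p k (i + 1) x})
    (hA : A = {x | x ∉ B ∧ ActsAs p k i x}) :
    ∀ b ∈ B, ∀ a ∈ A, ∀ a' ∈ A,
      ActsAsPair p k i a b → ActsAsPair p k i a' b → a = a' :=
  stmt5_general k i n hi1 p hp B A hB hA
end

section
/- Let k ≥ 2, 1 ≤ i ≤ k−1, and let p be a permutation of length n that avoids every pattern in M_{k,i+1,i+1}. Say a position x of p 'acts as the m-th term' (1 ≤ m ≤ k) if there is a strictly increasing sequence of positions x_1 < x_2 < ⋯ < x_k with x_m = x such that p(x_1) < p(x_2) < ⋯ < p(x_k). Let B be the set of positions that act as the (i+1)-st term of such an increasing subsequence of length k, and let A be the set of positions not in B that act as the i-th term. Suppose a ∈ A and b ∈ B are such that some increasing subsequence of length k in p has a as its i-th term and b as its (i+1)-st term. Then p is strictly increasing on the interval of positions from a to b (that is, p(s) < p(t) whenever a ≤ s < t ≤ b), and every position s with a < s ≤ b belongs to B. -/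
set_option maxHeartbeats 1000000

lemma rank_iff {k : ℕ} {α : Type*} [LinearOrder α] {w : Fin k → α} (hw : StrictMono w)
    {z : α} (hz : ∀ j, w j ≠ z) (j : Fin k) :
    w j < z ↔ (j : ℕ) < (Finset.univ.filter (fun j => w j < z)).card := by
  constructor
  · intro h
    have hsub : Finset.Iic j ⊆ Finset.univ.filter (fun j => w j < z) := by
      intro j' hj'
      simp only [Finset.mem_Iic] at hj'
      simp only [Finset.mem_filter, Finset.mem_univ, true_and]
      exact lt_of_le_of_lt (hw.monotone hj') h
    have := Finset.card_le_card hsub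
    rw [Fin.card_Iic] at this
    omega
  · intro h
    by_contra hc
    have hzj : z < w j := lt_of_le_of_ne (not_lt.mp hc) (hz j).symm
    have hsub : Finset.univ.filter (fun j => w j < z) ⊆ Finset.Iio j := by
      intro j' hj'
      simp only [Finset.mem_filter, Finset.mem_univ, true_and] at hj'
      exact Finset.mem_Iio.mpr (hw.lt_iff_lt.mp (hj'.trans hzj))
    have := Finset.card_le_card hsub
    rw [Fin.card_Iio] at this
    omega

lemma key {k i n : ℕ} (hi1 : 1 ≤ i) (hik : i < k)
    {p : Equiv.Perm (Fin n)} (hp : p ∈ Av n (MSet k (i + 1) (i + 1)))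
    {y : Fin (k+1) → Fin n} (hy : StrictMono y)
    (hv : StrictMono (fun j : Fin k => p (y (Fin.succAbove ⟨i, Nat.lt_succ_of_lt hik⟩ j)))) :
    p (y ⟨i-1, by omega⟩) < p (y ⟨i, by omega⟩) ∧ p (y ⟨i, by omega⟩) < p (y ⟨i+1, by omega⟩) := by
  have hik1 : i < k + 1 := by omega
  set c : Fin (k+1) := ⟨i, hik1⟩ with hc
  set w : Fin k → Fin n := fun j => p (y (c.succAbove j)) with hw_def
  set z : Fin n := p (y c) with hz_def
  have hw : StrictMono w := hv
  have hzne : ∀ j, w j ≠ z := fun j hEq =>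
    Fin.succAbove_ne c j (hy.injective (p.injective hEq))
  set d := (Finset.univ.filter (fun j => w j < z)).card with hd
  have hdk : d ≤ k := (Finset.card_filter_le _ _).trans (by simp)
  have hiff : ∀ j : Fin k, w j < z ↔ (j:ℕ) < d := fun j => rank_iff hw hzne j
  have hiff' : ∀ j : Fin k, z < w j ↔ d ≤ (j:ℕ) := by
    intro j
    constructor
    · intro h
      by_contra hc2
      exact absurd ((hiff j).mpr (by omega)) (asymm h)
    · intro h
      have h1 : ¬ w j < z := by rw [hiff]; omega
      exact lt_of_le_of_ne (not_lt.mp h1) (hzne j).symm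
  have hdi : d = i := by
    by_contra hne
    refine hp ⟨k+1, sigmaP k (i+1) (d+1)⟩ ⟨d+1, by omega, by omega, by omega, rfl⟩ ?_
    set dF : Fin (k+1) := ⟨d, by omega⟩ with hdF
    have e1 : (i+1-1) % (k+1) = (c : ℕ) := by
      rw [Nat.add_sub_cancel]; exact Nat.mod_eq_of_lt hik1
    have e2 : (d+1-1) % (k+1) = (dF : ℕ) := by
      rw [Nat.add_sub_cancel]; exact Nat.mod_eq_of_lt (by omega)
    have hσ : sigmaP k (i+1) (d+1) = (finSuccEquiv' c).trans (finSuccEquiv' dF).symm := by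
      have h1 : (⟨(i+1-1)%(k+1), Nat.mod_lt _ (Nat.succ_pos k)⟩ : Fin (k+1)) = c := Fin.ext e1
      have h2 : (⟨(d+1-1)%(k+1), Nat.mod_lt _ (Nat.succ_pos k)⟩ : Fin (k+1)) = dF := Fin.ext e2
      rw [sigmaP, h1, h2]
    have hσc : sigmaP k (i+1) (d+1) c = dF := by
      rw [hσ]; simp [Equiv.trans_apply, finSuccEquiv'_at, finSuccEquiv'_symm_none]
    have hσs : ∀ j : Fin k, sigmaP k (i+1) (d+1) (c.succAbove j) = dF.succAbove j := by
      intro j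
      rw [hσ]; simp [Equiv.trans_apply, finSuccEquiv'_succAbove, finSuccEquiv'_symm_some]
    refine ⟨y, hy, ?_⟩
    intro x₁ x₂
    rcases eq_or_ne x₁ c with rfl | h1c
    · rcases eq_or_ne x₂ c with rfl | h2c
      · simp
      · obtain ⟨j, rfl⟩ := Fin.exists_succAbove_eq h2c
        rw [hσc, hσs, Fin.lt_succAbove_iff_le_castSucc]
        rw [Fin.le_def]
        exact (hiff' j).symm
    · rcases eq_or_ne x₂ c with rfl | h2c
      · obtain ⟨j, rfl⟩ := Fin.exists_succAbove_eq h1c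
        rw [hσc, hσs, Fin.succAbove_lt_iff_castSucc_lt]
        rw [Fin.lt_def]
        exact (hiff j).symm
      · obtain ⟨j₁, rfl⟩ := Fin.exists_succAbove_eq h1c
        obtain ⟨j₂, rfl⟩ := Fin.exists_succAbove_eq h2c
        rw [hσs, hσs, Fin.succAbove_lt_succAbove_iff]
        exact hw.lt_iff_lt.symm
  have hs1 : c.succAbove ⟨i-1, by omega⟩ = (⟨i-1, by omega⟩ : Fin (k+1)) := by
    rw [Fin.succAbove_of_castSucc_lt]
    · rfl
    · rw [Fin.lt_def]; show i - 1 < i; omega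
  have hs2 : c.succAbove ⟨i, hik⟩ = (⟨i+1, by omega⟩ : Fin (k+1)) := by
    rw [Fin.succAbove_of_le_castSucc]
    · rfl
    · rw [Fin.le_def]; show i ≤ i; omega
  have h1 : w ⟨i-1, by omega⟩ < z := (hiff _).mpr (by show i - 1 < d; omega)
  have h2 : z < w ⟨i, hik⟩ := (hiff' _).mpr (by show d ≤ i; omega)
  refine ⟨?_, ?_⟩
  · have h1' : p (y (c.succAbove ⟨i-1, by omega⟩)) < z := h1
    rw [hs1] at h1'
    exact h1'
  · have h2' : z < p (y (c.succAbove ⟨i, hik⟩)) := h2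
    rw [hs2] at h2'
    exact h2'

lemma ins {k i n : ℕ} (hi1 : 1 ≤ i) (hik : i < k)
    {p : Equiv.Perm (Fin n)} (hp : p ∈ Av n (MSet k (i + 1) (i + 1)))
    {g : Fin k → Fin n} (hg : StrictMono g) (hpg : StrictMono (fun j => p (g j)))
    {x : Fin n} (h1 : g ⟨i-1, by omega⟩ < x) (h2 : x < g ⟨i, hik⟩) :
    p (g ⟨i-1, by omega⟩) < p x ∧ p x < p (g ⟨i, hik⟩) := by
  have hik1 : i < k + 1 := by omega
  set c : Fin (k+1) := ⟨i, hik1⟩ with hc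
  obtain ⟨y, hyc, hys⟩ : ∃ y : Fin (k+1) → Fin n, y c = x ∧ ∀ j, y (c.succAbove j) = g j := by
    refine ⟨fun m => Option.casesOn' (finSuccEquiv' c m) x g, ?_, ?_⟩
    · show Option.casesOn' (finSuccEquiv' c c) x g = x
      rw [finSuccEquiv'_at]
      rfl
    · intro j
      show Option.casesOn' (finSuccEquiv' c (c.succAbove j)) x g = g j
      rw [finSuccEquiv'_succAbove]
      rfl
  have hy : StrictMono y := by
    intro m₁ m₂ hlt
    rcases eq_or_ne m₁ c with rfl | h1c
    · obtain ⟨j, rfl⟩ := Fin.exists_succAbove_eq (ne_of_gt hlt)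
      rw [hyc, hys]
      have hcle : c ≤ j.castSucc := (Fin.lt_succAbove_iff_le_castSucc c j).mp hlt
      have hj : (⟨i, hik⟩ : Fin k) ≤ j := by
        rw [Fin.le_def] at hcle ⊢
        simpa using hcle
      exact lt_of_lt_of_le h2 (hg.monotone hj)
    · rcases eq_or_ne m₂ c with rfl | h2c
      · obtain ⟨j, rfl⟩ := Fin.exists_succAbove_eq h1c
        rw [hyc, hys]
        have hjc : j.castSucc < c := (Fin.succAbove_lt_iff_castSucc_lt c j).mp hlt
        have hj : j ≤ (⟨i-1, by omega⟩ : Fin k) := by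
          rw [Fin.lt_def] at hjc
          rw [Fin.le_def]
          show (j : ℕ) ≤ i - 1
          have : (j : ℕ) < i := hjc
          omega
        exact lt_of_le_of_lt (hg.monotone hj) h1
      · obtain ⟨j₁, rfl⟩ := Fin.exists_succAbove_eq h1c
        obtain ⟨j₂, rfl⟩ := Fin.exists_succAbove_eq h2c
        rw [hys, hys]
        exact hg (Fin.succAbove_lt_succAbove_iff.mp hlt)
  have hv : StrictMono (fun j : Fin k => p (y (Fin.succAbove ⟨i, Nat.lt_succ_of_lt hik⟩ j))) := by
    have heq : (fun j : Fin k => p (y (Fin.succAbove ⟨i, Nat.lt_succ_of_lt hik⟩ j)))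
        = fun j => p (g j) := by
      funext j
      rw [show (⟨i, Nat.lt_succ_of_lt hik⟩ : Fin (k+1)) = c from rfl, hys]
    rw [heq]
    exact hpg
  obtain ⟨H1, H2⟩ := key hi1 hik hp hy hv
  have hs1 : c.succAbove ⟨i-1, by omega⟩ = (⟨i-1, by omega⟩ : Fin (k+1)) :=
    (Fin.succAbove_of_castSucc_lt c ⟨i-1, by omega⟩
      (by rw [Fin.lt_def]; show i - 1 < i; omega)).trans rfl
  have hs2 : c.succAbove ⟨i, hik⟩ = (⟨i+1, by omega⟩ : Fin (k+1)) :=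
    (Fin.succAbove_of_le_castSucc c ⟨i, hik⟩
      (by rw [Fin.le_def]; show i ≤ i; omega)).trans rfl
  have e1 : y ⟨i-1, by omega⟩ = g ⟨i-1, by omega⟩ :=
    (congrArg y hs1).symm.trans (hys ⟨i-1, by omega⟩)
  have e2 : y (⟨i, by omega⟩ : Fin (k+1)) = x := hyc
  have e3 : y ⟨i+1, by omega⟩ = g ⟨i, hik⟩ :=
    (congrArg y hs2).symm.trans (hys ⟨i, hik⟩)
  exact ⟨lt_of_eq_of_lt (congrArg p e1).symm (lt_of_lt_of_eq H1 (congrArg p e2)),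
    lt_of_eq_of_lt (congrArg p e2).symm (lt_of_lt_of_eq H2 (congrArg p e3))⟩

lemma update_pair {k n : ℕ} (p : Equiv.Perm (Fin n)) {g : Fin k → Fin n} (hg : StrictMono g)
    (hpg : StrictMono fun j => p (g j)) (m : Fin k) (x : Fin n)
    (hlb : ∀ j < m, g j < x) (hub : ∀ j, m < j → x < g j)
    (hplb : ∀ j < m, p (g j) < p x) (hpub : ∀ j, m < j → p x < p (g j)) :
    StrictMono (Function.update g m x) ∧
      StrictMono (fun j => p (Function.update g m x j)) := by
  constructor
  · intro j₁ j₂ h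
    rcases eq_or_ne j₁ m with rfl | hne1
    · rw [Function.update_self, Function.update_of_ne (ne_of_gt h)]
      exact hub j₂ h
    · rcases eq_or_ne j₂ m with rfl | hne2
      · rw [Function.update_self, Function.update_of_ne hne1]
        exact hlb j₁ h
      · rw [Function.update_of_ne hne1, Function.update_of_ne hne2]
        exact hg h
  · intro j₁ j₂ h
    simp only
    rcases eq_or_ne j₁ m with rfl | hne1
    · rw [Function.update_self, Function.update_of_ne (ne_of_gt h)]
      exact hpub j₂ h
    · rcases eq_or_ne j₂ m with rfl | hne2
      · rw [Function.update_self, Function.update_of_ne hne1]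
        exact hplb j₁ h
      · rw [Function.update_of_ne hne1, Function.update_of_ne hne2]
        exact hpg h

/-- If `p` avoids `M_{k,i+1,i+1}`, `a ∈ A`, `b ∈ B` and some increasing subsequence of
length `k` has `a` as its `i`-th and `b` as its `(i+1)`-st term, then `p` is strictly
increasing on the interval of positions from `a` to `b`, and every position `s` with
`a < s ≤ b` belongs to `B`. -/
theorem stmt6 (k i n : ℕ) (hk : 2 ≤ k) (hi1 : 1 ≤ i) (hi2 : i ≤ k - 1)
    (p : Equiv.Perm (Fin n)) (hp : p ∈ Av n (MSet k (i + 1) (i + 1)))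
    (B A : Set (Fin n))
    (hB : B = {x | ActsAs p k (i + 1) x})
    (hA : A = {x | x ∉ B ∧ ActsAs p k i x})
    (a b : Fin n) (ha : a ∈ A) (hb : b ∈ B) (hab : ActsAsPair p k i a b) :
    (∀ s t : Fin n, a ≤ s → s < t → t ≤ b → p s < p t) ∧
    (∀ s : Fin n, a < s → s ≤ b → s ∈ B) := by
  obtain ⟨g, hg, hpg, hm, hik, hga, hgb⟩ := hab
  have halpha : ∀ x : Fin n, a < x → x < b → p a < p x ∧ p x < p b := by
    intro x hax hxb
    have h1 : g ⟨i-1, by omega⟩ < x := lt_of_eq_of_lt (show g ⟨i-1, by omega⟩ = a from hga) hax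
    have h2 : x < g ⟨i, hik⟩ := lt_of_lt_of_eq hxb hgb.symm
    obtain ⟨t1, t2⟩ := ins hi1 hik hp hg hpg h1 h2
    constructor
    · exact lt_of_eq_of_lt (congrArg p hga).symm t1
    · exact lt_of_lt_of_eq t2 (congrArg p hgb)
  have hpab : p a < p b := by
    have h' := hpg (show (⟨i-1, hm⟩ : Fin k) < ⟨i, hik⟩ from by
      rw [Fin.lt_def]; show i - 1 < i; omega)
    exact lt_of_eq_of_lt (congrArg p hga).symm (lt_of_lt_of_eq h' (congrArg p hgb))
  have hbeta : ∀ s t : Fin n, a < s → s < t → t < b → p s < p t := by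
    intro s t has hst htb
    have hsb : s < b := hst.trans htb
    have hpas := halpha s has hsb
    have hlb : ∀ j < (⟨i-1, hm⟩ : Fin k), g j < s := by
      intro j hj
      exact lt_trans (lt_of_lt_of_eq (hg hj) hga) has
    have hub : ∀ j, (⟨i-1, hm⟩ : Fin k) < j → s < g j := by
      intro j hj
      have h' : i - 1 < (j : ℕ) := by rw [Fin.lt_def] at hj; exact hj
      have hj2 : (⟨i, hik⟩ : Fin k) ≤ j := by
        rw [Fin.le_def]; show i ≤ (j : ℕ); omega
      exact lt_of_lt_of_le (lt_of_lt_of_eq hsb hgb.symm) (hg.monotone hj2)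
    have hplb : ∀ j < (⟨i-1, hm⟩ : Fin k), p (g j) < p s := by
      intro j hj
      exact lt_trans (lt_of_lt_of_eq (hpg hj) (congrArg p hga)) hpas.1
    have hpub : ∀ j, (⟨i-1, hm⟩ : Fin k) < j → p s < p (g j) := by
      intro j hj
      have h' : i - 1 < (j : ℕ) := by rw [Fin.lt_def] at hj; exact hj
      have hj2 : (⟨i, hik⟩ : Fin k) ≤ j := by
        rw [Fin.le_def]; show i ≤ (j : ℕ); omega
      exact lt_of_lt_of_le (lt_of_lt_of_eq hpas.2 (congrArg p hgb).symm) (hpg.monotone hj2)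
    obtain ⟨hg', hpg'⟩ := update_pair p hg hpg ⟨i-1, hm⟩ s hlb hub hplb hpub
    have hup1 : Function.update g ⟨i-1, hm⟩ s ⟨i-1, hm⟩ = s := Function.update_self _ _ _
    have hup2 : Function.update g ⟨i-1, hm⟩ s ⟨i, hik⟩ = b := by
      rw [Function.update_of_ne (Fin.ne_of_val_ne (show i ≠ i - 1 by omega))]
      exact hgb
    have H := ins hi1 hik hp hg' hpg'
      (lt_of_eq_of_lt hup1 hst) (lt_of_lt_of_eq htb hup2.symm)
    exact lt_of_eq_of_lt (congrArg p hup1).symm H.1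
  refine ⟨?_, ?_⟩
  · intro s t hs hst htb
    rcases eq_or_lt_of_le hs with rfl | has
    · rcases eq_or_lt_of_le htb with rfl | htb'
      · exact hpab
      · exact (halpha t hst htb').1
    · rcases eq_or_lt_of_le htb with rfl | htb'
      · exact (halpha s has hst).2
      · exact hbeta s t has hst htb'
  · intro s has hsb
    rcases eq_or_lt_of_le hsb with rfl | hsb'
    · exact hb
    · have hpas := halpha s has hsb'
      rw [hB]
      have hlb : ∀ j < (⟨i, hik⟩ : Fin k), g j < s := by
        intro j hj
        have h' : (j : ℕ) < i := by rw [Fin.lt_def] at hj; exact hj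
        have hj2 : j ≤ (⟨i-1, hm⟩ : Fin k) := by
          rw [Fin.le_def]; show (j : ℕ) ≤ i - 1; omega
        exact lt_of_le_of_lt (le_of_le_of_eq (hg.monotone hj2) hga) has
      have hub : ∀ j, (⟨i, hik⟩ : Fin k) < j → s < g j := by
        intro j hj
        exact lt_trans (lt_of_lt_of_eq hsb' hgb.symm) (hg hj)
      have hplb : ∀ j < (⟨i, hik⟩ : Fin k), p (g j) < p s := by
        intro j hj
        have h' : (j : ℕ) < i := by rw [Fin.lt_def] at hj; exact hj
        have hj2 : j ≤ (⟨i-1, hm⟩ : Fin k) := by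
          rw [Fin.le_def]; show (j : ℕ) ≤ i - 1; omega
        exact lt_of_le_of_lt (le_of_le_of_eq (hpg.monotone hj2) (congrArg p hga)) hpas.1
      have hpub : ∀ j, (⟨i, hik⟩ : Fin k) < j → p s < p (g j) := by
        intro j hj
        exact lt_trans (lt_of_lt_of_eq hpas.2 (congrArg p hgb).symm) (hpg hj)
      obtain ⟨hg2, hpg2⟩ := update_pair p hg hpg ⟨i, hik⟩ s hlb hub hplb hpub
      exact ⟨Function.update g ⟨i, hik⟩ s, hg2, hpg2, by omega,
        Function.update_self _ _ _⟩
end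

section
/- Let k ≥ 2 and 2 ≤ j ≤ k. Then for every n ≥ 1, |Av_n(M_{k,j,j+1})| ≤ |Av_n(M_{k,j,j})|. -/
/-!
Write `j = J + 1` and index from `0`. A permutation `p` avoids `M_{k,j,i}` exactly when, for every
increasing subsequence `u 0 < ⋯ < u (k-1)` (in positions and values) and every entry `w` placed
between `u (J-1)` and `u J`, exactly `i - 1` of the values `p (u m)` lie below `p w`.

Let `p` avoid `M_{k,j,j+1}`, so that `w` always lies just above `u J`. The union of the position
intervals `[w, u J]` over all such configurations splits into maximal runs of consecutive positions;
on each run `p` decreases, and the run is framed by a single increasing sequence whose `(J-1)`-st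
entry sits just left of the run and whose `J`-th entry is its right end. Reversing `p` on every run
yields a permutation in which every gap entry lies just below `u J`, i.e. one avoiding `M_{k,j,j}`:
an increasing sequence of the reversed permutation is straightened, run by run, into one of `p`,
and a misplaced gap entry would produce a configuration of `p` reaching outside its run. The
reversed permutation has the same runs, so reversing them once more recovers `p`.
-/

namespace AlmostDistant

open Classical

variable {n : ℕ}

section Runs

variable (S : Set (Fin n))

-- For `x ∈ S`, the two ends of the maximal interval of `S` through `x`; junk values otherwise.
noncomputable def runStart (x : Fin n) : ℕ :=
  sInf {l : ℕ | ∀ t : Fin n, l ≤ t → t ≤ x → t ∈ S}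

noncomputable def runEnd (x : Fin n) : ℕ :=
  Nat.findGreatest (fun h => ∀ t : Fin n, x ≤ t → (t : ℕ) ≤ h → t ∈ S) (n - 1)

variable {S} {x y t : Fin n}

lemma runStart_le_of_forall {l : ℕ} (h : ∀ t : Fin n, l ≤ t → t ≤ x → t ∈ S) :
    runStart S x ≤ l :=
  Nat.sInf_le h

lemma runStart_le (hx : x ∈ S) : runStart S x ≤ x :=
  runStart_le_of_forall fun t h₁ h₂ => by rwa [show t = x by omega]

lemma le_runEnd_of_forall {h : ℕ} (hn : h < n)
    (H : ∀ t : Fin n, x ≤ t → (t : ℕ) ≤ h → t ∈ S) : h ≤ runEnd S x :=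
  Nat.le_findGreatest (by omega) H

lemma le_runEnd (hx : x ∈ S) : (x : ℕ) ≤ runEnd S x :=
  le_runEnd_of_forall x.isLt fun t h₁ h₂ => by rwa [show t = x by omega]

lemma runEnd_lt (x : Fin n) : runEnd S x < n :=
  (Nat.findGreatest_le _).trans_lt (by have := x.isLt; omega)

lemma mem_of_mem_run (hx : x ∈ S) (ht₁ : runStart S x ≤ t) (ht₂ : t ≤ runEnd S x) :
    t ∈ S := by
  rcases le_total t x with h | h
  · exact Nat.sInf_mem (s := {l : ℕ | ∀ t : Fin n, l ≤ t → t ≤ x → t ∈ S})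
      ⟨x + 1, fun t h₁ h₂ => by omega⟩ t ht₁ h
  · exact Nat.findGreatest_spec (m := x)
      (P := fun h => ∀ t : Fin n, x ≤ t → (t : ℕ) ≤ h → t ∈ S) (by omega)
      (fun t h₁ h₂ => by rwa [show t = x by omega]) t h ht₂

lemma runStart_le_of_Icc {l h : ℕ} (hS : ∀ t : Fin n, l ≤ t → (t : ℕ) ≤ h → t ∈ S)
    (hx : (x : ℕ) ≤ h) : runStart S x ≤ l :=
  runStart_le_of_forall fun t h₁ h₂ => hS t h₁ (by omega)

lemma le_runEnd_of_Icc {l h : ℕ} (hS : ∀ t : Fin n, l ≤ t → (t : ℕ) ≤ h → t ∈ S)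
    (hx : l ≤ x) (hn : h < n) : h ≤ runEnd S x :=
  le_runEnd_of_forall hn fun t h₁ h₂ => hS t (by omega) h₂

lemma runStart_eq_and_runEnd_eq (hx : x ∈ S) (ht₁ : runStart S x ≤ t)
    (ht₂ : t ≤ runEnd S x) : runStart S t = runStart S x ∧ runEnd S t = runEnd S x := by
  have ht : t ∈ S := mem_of_mem_run hx ht₁ ht₂
  have h₁ := runStart_le_of_Icc (fun s h₁ h₂ => mem_of_mem_run hx h₁ h₂) ht₂
  have h₂ := le_runEnd_of_Icc (fun s h₁ h₂ => mem_of_mem_run hx h₁ h₂) ht₁ (runEnd_lt x)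
  have h₃ := runStart_le_of_Icc (fun s h₁ h₂ => mem_of_mem_run ht h₁ h₂)
    (show (x : ℕ) ≤ runEnd S t by have := le_runEnd hx; omega)
  have h₄ := le_runEnd_of_Icc (fun s h₁ h₂ => mem_of_mem_run ht h₁ h₂)
    (show runStart S t ≤ x by have := runStart_le hx; omega) (runEnd_lt t)
  omega

lemma runStart_eq (hx : x ∈ S) (ht₁ : runStart S x ≤ t) (ht₂ : t ≤ runEnd S x) :
    runStart S t = runStart S x :=
  (runStart_eq_and_runEnd_eq hx ht₁ ht₂).1

lemma runEnd_eq (hx : x ∈ S) (ht₁ : runStart S x ≤ t) (ht₂ : t ≤ runEnd S x) :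
    runEnd S t = runEnd S x :=
  (runStart_eq_and_runEnd_eq hx ht₁ ht₂).2

lemma lt_runStart_of_not_mem (hx : x ∈ S) (htx : t ≤ x) (ht : t ∉ S) : t < runStart S x := by
  by_contra h
  exact ht (mem_of_mem_run hx (by omega) (by have := le_runEnd hx; omega))

lemma runEnd_lt_of_not_mem (hx : x ∈ S) (hxt : x ≤ t) (ht : t ∉ S) : runEnd S x < t := by
  by_contra h
  exact ht (mem_of_mem_run hx (by have := runStart_le hx; omega) (by omega))

lemma not_mem_of_add_one_eq_runStart (hx : x ∈ S) (ht : (t : ℕ) + 1 = runStart S x) : t ∉ S :=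
  fun htS => by
    have := runStart_le_of_forall (x := x) (l := t) fun s h₁ h₂ =>
      if hs : (s : ℕ) = t then by rwa [show s = t by omega] else
        mem_of_mem_run hx (by omega) (by have := le_runEnd hx; omega)
    omega

lemma not_mem_of_eq_runEnd_add_one (hx : x ∈ S) (ht : (t : ℕ) = runEnd S x + 1) : t ∉ S :=
  fun htS => by
    have := le_runEnd_of_forall (x := x) (S := S) t.isLt fun s h₁ h₂ =>
      if hs : (s : ℕ) = t then by rwa [show s = t by omega] else
        mem_of_mem_run hx (by have := runStart_le hx; omega) (by omega)
    omega

lemma runEnd_add_one_lt_runStart (hx : x ∈ S) (hy : y ∈ S) (hxy : (x : ℕ) < runStart S y) :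
    runEnd S x + 1 < runStart S y := by
  have := runStart_le hx; have := le_runEnd hx; have := runStart_le hy
  by_contra h
  rcases Nat.lt_or_ge (runStart S y) (runEnd S x + 1) with h' | h'
  · obtain ⟨z, hz⟩ : ∃ z : Fin n, (z : ℕ) = runStart S y :=
      ⟨⟨runStart S y, by omega⟩, rfl⟩
    have h₁ := runStart_eq hx (t := z) (by omega) (by omega)
    have h₂ := runStart_eq hy (t := z) (by omega) (by have := le_runEnd hy; omega)
    omega
  · obtain ⟨z, hz⟩ : ∃ z : Fin n, (z : ℕ) = runEnd S x := ⟨⟨_, runEnd_lt x⟩, rfl⟩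
    exact not_mem_of_add_one_eq_runStart hy (t := z) (by omega)
      (mem_of_mem_run hx (by omega) (by omega))

variable (S) in
noncomputable def mirror (x : Fin n) : Fin n :=
  if hx : x ∈ S then
    ⟨runStart S x + runEnd S x - x,
      by have := runStart_le hx; have := runEnd_lt (S := S) x; omega⟩
  else x

lemma mirror_of_not_mem (hx : x ∉ S) : mirror S x = x := dif_neg hx

lemma val_mirror (hx : x ∈ S) : (mirror S x : ℕ) = runStart S x + runEnd S x - x := by
  rw [mirror, dif_pos hx]

lemma runStart_le_mirror (hx : x ∈ S) : runStart S x ≤ mirror S x := by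
  have := le_runEnd hx; rw [val_mirror hx]; omega

lemma mirror_le_runEnd (hx : x ∈ S) : (mirror S x : ℕ) ≤ runEnd S x := by
  have := runStart_le hx; rw [val_mirror hx]; omega

lemma mirror_mem (hx : x ∈ S) : mirror S x ∈ S :=
  mem_of_mem_run hx (runStart_le_mirror hx) (mirror_le_runEnd hx)

lemma mirror_mem_iff : mirror S x ∈ S ↔ x ∈ S :=
  ⟨fun h => by_contra fun hx => hx (mirror_of_not_mem hx ▸ h), mirror_mem⟩

lemma val_mirror_of_eq_runEnd (hx : x ∈ S) (hy : (y : ℕ) = runEnd S x) :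
    (mirror S y : ℕ) = runStart S x := by
  have := runStart_le hx; have := le_runEnd hx
  rw [val_mirror (mem_of_mem_run hx (by omega) hy.le), runStart_eq hx (by omega) hy.le,
    runEnd_eq hx (by omega) hy.le]
  omega

lemma runStart_mirror (hx : x ∈ S) : runStart S (mirror S x) = runStart S x :=
  runStart_eq hx (runStart_le_mirror hx) (mirror_le_runEnd hx)

lemma runEnd_mirror (hx : x ∈ S) : runEnd S (mirror S x) = runEnd S x :=
  runEnd_eq hx (runStart_le_mirror hx) (mirror_le_runEnd hx)

lemma mirror_mirror (x : Fin n) : mirror S (mirror S x) = x := by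
  by_cases hx : x ∈ S
  · have := runStart_le hx; have := le_runEnd hx
    ext
    rw [val_mirror (mirror_mem hx), runStart_mirror hx, runEnd_mirror hx, val_mirror hx]
    omega
  · rw [mirror_of_not_mem hx, mirror_of_not_mem hx]

lemma mirror_lt_mirror_of_mem_run (hx : x ∈ S) (hxy : x < y) (hy : y ≤ runEnd S x) :
    mirror S y < mirror S x := by
  have := runStart_le hx
  have hy' : y ∈ S := mem_of_mem_run hx (by omega) hy
  have := runStart_eq hx (t := y) (by omega) hy
  have := runEnd_eq hx (t := y) (by omega) hy
  rw [Fin.lt_def, val_mirror hx, val_mirror hy']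
  omega

lemma mirror_lt_runStart (hy : y ∈ S) (hxy : x < runStart S y) : mirror S x < runStart S y := by
  by_cases hx : x ∈ S
  · have := runEnd_add_one_lt_runStart hx hy hxy; have := mirror_le_runEnd hx; omega
  · rwa [mirror_of_not_mem hx]

lemma runEnd_lt_mirror (hx : x ∈ S) (hxy : runEnd S x < y) : runEnd S x < mirror S y := by
  by_cases hy : y ∈ S
  · obtain ⟨t, ht⟩ : ∃ t : Fin n, (t : ℕ) = runEnd S x + 1 :=
      ⟨⟨runEnd S x + 1, by omega⟩, rfl⟩
    have := lt_runStart_of_not_mem hy (by omega) (not_mem_of_eq_runEnd_add_one hx ht)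
    have := runStart_le_mirror hy
    omega
  · rwa [mirror_of_not_mem hy]

lemma mirror_lt_mirror (hxy : x < y) (h : x ∈ S → runEnd S x < y) :
    mirror S x < mirror S y := by
  by_cases hx : x ∈ S
  · have := runEnd_lt_mirror hx (h hx); have := mirror_le_runEnd hx; omega
  · rw [mirror_of_not_mem hx]
    by_cases hy : y ∈ S
    · have := lt_runStart_of_not_mem hy hxy.le hx; have := runStart_le_mirror hy; omega
    · rwa [mirror_of_not_mem hy]

end Runs

section Patterns

variable {p : Equiv.Perm (Fin n)} {u a b : ℕ → Fin n} {w x y z : Fin n} {k J i lo hi m : ℕ}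

def NonInv (p : Equiv.Perm (Fin n)) (x y : Fin n) : Prop := x < y ∧ p x < p y

lemma NonInv.trans (h₁ : NonInv p x y) (h₂ : NonInv p y z) : NonInv p x z :=
  ⟨h₁.1.trans h₂.1, h₁.2.trans h₂.2⟩

def IncOn (p : Equiv.Perm (Fin n)) (u : ℕ → Fin n) (lo hi : ℕ) : Prop :=
  ∀ i i', lo ≤ i → i < i' → i' < hi → NonInv p (u i) (u i')

lemma IncOn.mono {lo' hi' : ℕ} (h : IncOn p u lo hi) (hlo : lo ≤ lo') (hhi : hi' ≤ hi) :
    IncOn p u lo' hi' :=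
  fun i i' h₁ h₂ h₃ => h i i' (hlo.trans h₁) h₂ (by omega)

lemma IncOn.le {i' : ℕ} (h : IncOn p u lo hi) (h₁ : lo ≤ i) (h₂ : i ≤ i')
    (h₃ : i' < hi) : u i ≤ u i' ∧ p (u i) ≤ p (u i') := by
  rcases h₂.eq_or_lt with rfl | h₂
  · exact ⟨le_rfl, le_rfl⟩
  · exact ⟨(h i i' h₁ h₂ h₃).1.le, (h i i' h₁ h₂ h₃).2.le⟩

lemma IncOn.of_succ (h : ∀ i, lo ≤ i → i + 1 < hi → NonInv p (u i) (u (i + 1))) :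
    IncOn p u lo hi := by
  intro i i' h₁ h₂ h₃
  induction i', h₂ using Nat.le_induction with
  | base => exact h i h₁ h₃
  | succ m hm ih => exact (ih (by omega)).trans (h m (by omega) h₃)

lemma IncOn.splice (ha : IncOn p a lo m) (hb : IncOn p b m hi)
    (hab : lo < m → m < hi → NonInv p (a (m - 1)) (b m)) :
    IncOn p (fun i => if i < m then a i else b i) lo hi :=
  IncOn.of_succ fun i h₁ h₂ => by
    rcases lt_trichotomy (i + 1) m with h | h | h
    · rw [if_pos (by omega), if_pos h]; exact ha i (i + 1) h₁ (by omega) h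
    · subst h
      rw [if_pos (by omega), if_neg (by omega)]
      simpa using hab (by omega) h₂
    · rw [if_neg (by omega), if_neg (by omega)]; exact hb i (i + 1) (by omega) (by omega) h₂

lemma IncOn.insert (ha : IncOn p a lo m) (hb : IncOn p b (m + 1) hi)
    (hax : lo < m → NonInv p (a (m - 1)) x) (hxb : m + 1 < hi → NonInv p x (b (m + 1))) :
    IncOn p (fun i => if i < m then a i else if i = m then x else b i) lo hi :=
  IncOn.of_succ fun i h₁ h₂ => by
    rcases lt_trichotomy (i + 1) m with h | h | h
    · rw [if_pos (by omega), if_pos h]; exact ha i (i + 1) h₁ (by omega) h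
    · subst h
      rw [if_pos (by omega), if_neg (by omega), if_pos rfl]
      simpa using hax (by omega)
    · rcases (show m ≤ i by omega).eq_or_lt with rfl | h'
      · simpa using hxb h₂
      · simp only [show ¬ i < m by omega, show ¬ i + 1 < m by omega, show i ≠ m by omega,
          show i + 1 ≠ m by omega, if_false]
        exact hb i (i + 1) (by omega) (by omega) h₂

-- With `0`-based indices, `w` is the `(J+1)`-st entry of an occurrence of some `σ_{k,J+1,v}` and
-- the `u i` are its other entries; `RankIs k p u w (v - 1)` then pins down `v`.
structure Config (k J : ℕ) (p : Equiv.Perm (Fin n)) (u : ℕ → Fin n) (w : Fin n) : Prop where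
  inc : IncOn p u 0 k
  prev_lt : u (J - 1) < w
  lt_top : w < u J

lemma Config.lt_of_lt (hc : Config k J p u w) (hJk : J < k) (hi : i < J) : u i < w :=
  (hc.inc.le (Nat.zero_le _) (show i ≤ J - 1 by omega) (by omega)).1.trans_lt hc.prev_lt

lemma Config.lt_of_le (hc : Config k J p u w) (hi : J ≤ i) (hik : i < k) : w < u i :=
  hc.lt_top.trans_le (hc.inc.le (Nat.zero_le _) hi hik).1

lemma Config.ne (hc : Config k J p u w) (hJk : J < k) (hik : i < k) : u i ≠ w := by
  rcases Nat.lt_or_ge i J with h | h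
  · exact (hc.lt_of_lt hJk h).ne
  · exact (hc.lt_of_le h hik).ne'

def RankIs (k : ℕ) (p : Equiv.Perm (Fin n)) (u : ℕ → Fin n) (w : Fin n) (r : ℕ) : Prop :=
  ∀ i < k, p (u i) < p w ↔ i < r

def GapRank (k J : ℕ) (p : Equiv.Perm (Fin n)) (r : ℕ) : Prop :=
  ∀ u w, Config k J p u w → RankIs k p u w r

lemma exists_rankIs (hu : IncOn p u 0 k) (w : Fin n) : ∃ r ≤ k, RankIs k p u w r := by
  have h : ∃ r, ¬ (r < k ∧ p (u r) < p w) := ⟨k, fun h => h.1.false⟩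
  refine ⟨Nat.find h, Nat.find_min' h fun h' => h'.1.false,
    fun i hi => ⟨fun hlt => ?_, fun hlt => ?_⟩⟩
  · by_contra hge
    have hr := Nat.find_spec h
    have := (hu.le (Nat.zero_le _) (not_lt.mp hge) hi).2
    exact hr ⟨by omega, this.trans_lt hlt⟩
  · exact (not_not.mp (Nat.find_min h hlt)).2

lemma RankIs.eq {r r' : ℕ} (h : RankIs k p u w r) (h' : RankIs k p u w r') (hr : r ≤ k)
    (hr' : r' ≤ k) : r = r' := by
  by_contra hne
  rcases Nat.lt_or_gt_of_ne hne with hlt | hlt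
  · exact lt_irrefl r ((h r (by omega)).mp ((h' r (by omega)).mpr hlt))
  · exact lt_irrefl r' ((h' r' (by omega)).mp ((h r' (by omega)).mpr hlt))

lemma RankIs.lt_apply {r : ℕ} (h : RankIs k p u w r) (hc : Config k J p u w) (hJk : J < k)
    (hri : r ≤ i) (hik : i < k) : p w < p (u i) :=
  lt_of_le_of_ne (not_lt.mp fun hlt => by have := (h i hik).mp hlt; omega)
    (fun heq => hc.ne hJk hik (p.injective heq.symm))

lemma rankIs_of_bounds (hc : Config k J p u w) (hJ1 : 1 ≤ J) (hJk : J < k)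
    (h₁ : p (u (J - 1)) < p w) (h₂ : p w < p (u J)) : RankIs k p u w J := by
  intro i hi
  rcases Nat.lt_or_ge i J with h | h
  · have := (hc.inc.le (Nat.zero_le _) (show i ≤ J - 1 by omega) (by omega)).2
    exact iff_of_true (this.trans_lt h₁) h
  · have := (hc.inc.le (Nat.zero_le _) h hi).2
    exact iff_of_false (not_lt.mpr (h₂.trans_le this).le) (by omega)

end Patterns

section Bridge

variable {p : Equiv.Perm (Fin n)} {k J : ℕ}

lemma contains_iff_strictMono {m : ℕ} (p : Equiv.Perm (Fin n)) (q : Equiv.Perm (Fin m)) :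
    Contains p q ↔ ∃ f : Fin m → Fin n, StrictMono f ∧ StrictMono (p ∘ f ∘ q.symm) := by
  refine exists_congr fun f => and_congr_right fun _ => ⟨fun h a b hab => ?_, fun h a b => ?_⟩
  · simpa using (h (q.symm a) (q.symm b)).mp (by simpa using hab)
  · simpa using (h.lt_iff_lt (a := q a) (b := q b)).symm

lemma comp_insertNth {α β : Type*} {m : ℕ} (g : α → β) (i : Fin (m + 1)) (x : α)
    (f : Fin m → α) : g ∘ Fin.insertNth i x f = Fin.insertNth i (g x) (g ∘ f) := by
  funext j
  cases j using Fin.succAboveCases i <;> simp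

lemma comp_sigmaP_symm {α : Type*} {v : ℕ} (hJ : J < k + 1) (hv : v - 1 < k + 1)
    (f : Fin (k + 1) → α) :
    f ∘ (sigmaP k (J + 1) v).symm =
      Fin.insertNth ⟨v - 1, hv⟩ (f ⟨J, hJ⟩) (f ∘ Fin.succAbove ⟨J, hJ⟩) := by
  have hσ : sigmaP k (J + 1) v =
      (finSuccEquiv' ⟨J, hJ⟩).trans (finSuccEquiv' ⟨v - 1, hv⟩).symm := by
    simp only [sigmaP, Nat.add_sub_cancel, Nat.mod_eq_of_lt hJ, Nat.mod_eq_of_lt hv]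
  funext x
  cases x using Fin.succAboveCases ⟨v - 1, hv⟩ <;> simp [hσ]

lemma contains_sigmaP_iff (hJ1 : 1 ≤ J) (hJk : J < k) {v : ℕ} (hv1 : 1 ≤ v)
    (hvk : v ≤ k + 1) :
    Contains p (sigmaP k (J + 1) v) ↔ ∃ u w, Config k J p u w ∧ RankIs k p u w (v - 1) := by
  have hJ : J < k + 1 := by omega
  have hv : v - 1 < k + 1 := by omega
  rw [contains_iff_strictMono]
  constructor
  · rintro ⟨f, hf, hpf⟩
    rw [comp_sigmaP_symm hJ hv, comp_insertNth, Fin.strictMono_insertNth_iff] at hpf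
    rw [← Fin.insertNth_self_removeNth ⟨J, hJ⟩ f, Fin.strictMono_insertNth_iff] at hf
    obtain ⟨hg, hlt, hgt⟩ := hf
    obtain ⟨hpg, hplt, hpgt⟩ := hpf
    set g := Fin.removeNth ⟨J, hJ⟩ f
    refine ⟨fun i => if h : i < k then g ⟨i, h⟩ else f ⟨J, hJ⟩, f ⟨J, hJ⟩,
      ⟨?_, ?_, ?_⟩, ?_⟩
    · intro i i' _ hii' hi'
      simp only [dif_pos (show i < k by omega), dif_pos hi']
      exact ⟨hg (show (⟨i, _⟩ : Fin k) < ⟨i', hi'⟩ from hii'),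
        hpg (show (⟨i, _⟩ : Fin k) < ⟨i', hi'⟩ from hii')⟩
    · simp only [dif_pos (show J - 1 < k by omega)]
      exact hlt _ (by simp [Fin.lt_def]; omega)
    · simp only [dif_pos hJk]
      exact hgt _ (by simp)
    · intro i hi
      simp only [dif_pos hi]
      refine ⟨fun h => ?_, fun h => hplt ⟨i, hi⟩ (by simp [Fin.lt_def]; omega)⟩
      by_contra h'
      exact (hpgt ⟨i, hi⟩ (by simp [Fin.le_def]; omega)).asymm h
  · rintro ⟨u, w, hc, hr⟩
    refine ⟨Fin.insertNth ⟨J, hJ⟩ w (fun i => u i), ?_, ?_⟩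
    · rw [Fin.strictMono_insertNth_iff]
      exact ⟨fun i i' h => (hc.inc i i' (Nat.zero_le _) h i'.isLt).1,
        fun i h => hc.lt_of_lt hJk h, fun i h => hc.lt_of_le h i.isLt⟩
    · rw [comp_sigmaP_symm hJ hv, comp_insertNth, Fin.strictMono_insertNth_iff]
      simp only [Fin.insertNth_apply_same, Function.comp_def, Fin.insertNth_apply_succAbove]
      exact ⟨fun i i' h => (hc.inc i i' (Nat.zero_le _) h i'.isLt).2,
        fun i h => (hr i i.isLt).mpr h, fun i h => hr.lt_apply hc hJk h i.isLt⟩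

lemma mem_Av_MSet_iff (hJ1 : 1 ≤ J) (hJk : J < k) {i : ℕ} (hi1 : 1 ≤ i) (hik : i ≤ k + 1) :
    p ∈ Av n (MSet k (J + 1) i) ↔ GapRank k J p (i - 1) := by
  constructor
  · intro hp u w hc
    obtain ⟨r, hrk, hr⟩ := exists_rankIs hc.inc w
    by_contra hne
    refine hp _ ⟨r + 1, by omega, by omega, fun h => hne ?_, rfl⟩
      ((contains_sigmaP_iff hJ1 hJk (by omega) (by omega)).mpr ⟨u, w, hc, by simpa using hr⟩)
    rwa [← h, Nat.add_sub_cancel]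
  · rintro hB _ ⟨v, hv1, hvk, hvi, rfl⟩ hcont
    obtain ⟨u, w, hc, hr⟩ := (contains_sigmaP_iff hJ1 hJk hv1 hvk).mp hcont
    have := hr.eq (hB u w hc) (by omega) (by omega)
    omega

end Bridge

section Cover

variable {p : Equiv.Perm (Fin n)} {u a b U H : ℕ → Fin n} {w w' x y s t g : Fin n} {k J i : ℕ}

def cover (k J : ℕ) (p : Equiv.Perm (Fin n)) : Set (Fin n) :=
  {t | ∃ u w, Config k J p u w ∧ w ≤ t ∧ t ≤ u J}

lemma Config.mem_cover (hc : Config k J p u w) (h₁ : w ≤ t) (h₂ : t ≤ u J) :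
    t ∈ cover k J p :=
  ⟨u, w, hc, h₁, h₂⟩

lemma Config.runStart_le (hc : Config k J p u w) (ht : t ≤ u J) :
    runStart (cover k J p) t ≤ w :=
  runStart_le_of_Icc (fun _ h₁ h₂ => hc.mem_cover h₁ h₂) ht

lemma Config.le_runEnd (hc : Config k J p u w) (h₁ : w ≤ t) :
    (u J : ℕ) ≤ runEnd (cover k J p) t :=
  le_runEnd_of_Icc (fun _ h₁ h₂ => hc.mem_cover h₁ h₂) h₁ (u J).isLt

lemma runStart_lt_runEnd (hx : x ∈ cover k J p) :
    runStart (cover k J p) x < runEnd (cover k J p) x := by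
  obtain ⟨u, w, hc, h₁, h₂⟩ := hx
  have := hc.runStart_le h₂; have := hc.le_runEnd h₁; have := hc.lt_top
  omega

lemma GapRank.nonInv_prev (hB : GapRank k J p (J + 1)) (hJk : J < k) (hc : Config k J p u w) :
    NonInv p (u (J - 1)) w :=
  ⟨hc.prev_lt, (hB u w hc (J - 1) (by omega)).mpr (by omega)⟩

lemma GapRank.nonInv_next (hB : GapRank k J p (J + 1)) (hJk : J < k) (hc : Config k J p u w)
    (hJi : J < i) (hik : i < k) : NonInv p w (u i) :=
  ⟨hc.lt_of_le hJi.le hik, (hB u w hc).lt_apply hc hJk (by omega) hik⟩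

lemma GapRank.apply_top_lt (hB : GapRank k J p (J + 1)) (hJk : J < k) (hc : Config k J p u w) :
    p (u J) < p w :=
  (hB u w hc J hJk).mpr (by omega)

structure IsBlock (k J : ℕ) (p : Equiv.Perm (Fin n)) (x : Fin n) (U : ℕ → Fin n) : Prop where
  inc : IncOn p U 0 k
  prev_add_one : (U (J - 1) : ℕ) + 1 = runStart (cover k J p) x
  top : (U J : ℕ) = runEnd (cover k J p) x

lemma IsBlock.config (hU : IsBlock k J p x U) (ht₁ : runStart (cover k J p) x ≤ t)
    (ht₂ : t < runEnd (cover k J p) x) : Config k J p U t :=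
  ⟨hU.inc, by have := hU.prev_add_one; omega, by have := hU.top; omega⟩

variable (hJ1 : 1 ≤ J) (hJk : J < k) (hB : GapRank k J p (J + 1))
include hJ1 hJk hB

lemma GapRank.apply_lt_of_insert (ha : IncOn p a 0 J) (hb : IncOn p b (J + 1) k)
    (hax : NonInv p (a (J - 1)) x) (hxb : J + 1 < k → NonInv p x (b (J + 1)))
    (hg₁ : a (J - 1) < g) (hg₂ : g < x) : p x < p g := by
  have hc : Config k J p (fun i => if i < J then a i else if i = J then x else b i) g :=
    ⟨ha.insert hb (fun _ => hax) hxb, by simpa [show J - 1 < J by omega] using hg₁,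
      by simpa using hg₂⟩
  simpa using hB.apply_top_lt hJk hc

lemma GapRank.apply_lt_of_lt (hc : Config k J p u w) (hc' : Config k J p u w') (h : w < w') :
    p w' < p w :=
  hB.apply_lt_of_insert hJ1 hJk (hc.inc.mono le_rfl hJk.le) (hc.inc.mono (Nat.zero_le _) le_rfl)
    (hB.nonInv_prev hJk hc') (hB.nonInv_next hJk hc' (by omega)) hc.prev_lt h

lemma GapRank.apply_lt_of_le_top (hc : Config k J p u w) (hs : w ≤ s) (hst : s < t)
    (ht : t ≤ u J) : p t < p s := by
  have hcs : Config k J p u s := ⟨hc.inc, hc.prev_lt.trans_le hs, hst.trans_le ht⟩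
  rcases ht.eq_or_lt with rfl | ht
  · exact hB.apply_top_lt hJk hcs
  · exact hB.apply_lt_of_lt hJ1 hJk hcs ⟨hc.inc, hc.prev_lt.trans_le (hs.trans hst.le), ht⟩ hst

lemma GapRank.apply_succ_lt (hx : x ∈ cover k J p) (hy : y ∈ cover k J p)
    (hxy : (x : ℕ) + 1 = y) : p y < p x := by
  obtain ⟨u, a, hc, hax, hxu⟩ := hx
  obtain ⟨u', a', hc', hay, hyu⟩ := hy
  by_cases h₁ : y ≤ u J
  · exact hB.apply_lt_of_le_top hJ1 hJk hc hax (by omega) h₁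
  by_cases h₂ : a' ≤ x
  · exact hB.apply_lt_of_le_top hJ1 hJk hc' h₂ (by omega) hyu
  -- Now `x = u J` ends one span and `y = a'` starts the other.
  have hxu : x = u J := by omega
  obtain rfl : y = a' := by omega
  have := hc'.prev_lt
  rcases (show u' (J - 1) ≤ x by omega).lt_or_eq with h | h
  · exact hB.apply_lt_of_lt hJ1 hJk ⟨hc'.inc, h, by have := hc'.lt_top; omega⟩ hc' (by omega)
  · refine hB.apply_lt_of_insert hJ1 hJk (hc.inc.mono le_rfl hJk.le)
      (hc'.inc.mono (Nat.zero_le _) le_rfl) ?_ (hB.nonInv_next hJk hc' (by omega))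
      (hc.prev_lt.trans_le hax) (by omega)
    refine (NonInv.trans ⟨?_, ?_⟩ (hB.nonInv_prev hJk hc'))
    · have := hc.prev_lt; omega
    · rw [h, hxu]; exact (hc.inc (J - 1) J (Nat.zero_le _) (by omega) hJk).2

lemma GapRank.apply_lt_of_mem_run (hx : x ∈ cover k J p) (hxy : x < y)
    (hy : y ≤ runEnd (cover k J p) x) : p y < p x := by
  obtain ⟨m, hm⟩ : ∃ m, (y : ℕ) = x + m + 1 := ⟨y - x - 1, by omega⟩
  induction m generalizing y with
  | zero =>
    exact hB.apply_succ_lt hJ1 hJk hx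
      (mem_of_mem_run hx (by have := runStart_le hx; omega) hy) (by omega)
  | succ m ih =>
    obtain ⟨z, hz⟩ : ∃ z : Fin n, (z : ℕ) = x + m + 1 :=
      ⟨⟨x + m + 1, by omega⟩, rfl⟩
    have hz' : z ∈ cover k J p := mem_of_mem_run hx (by have := runStart_le hx; omega) (by omega)
    exact (hB.apply_succ_lt hJ1 hJk hz'
      (mem_of_mem_run hx (by have := runStart_le hx; omega) hy) (by omega)).trans
      (ih (by omega) (by omega) hz)

lemma GapRank.exists_isBlock (hx : x ∈ cover k J p) : ∃ U, IsBlock k J p x U := by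
  have hxs := runStart_le hx; have hxe := le_runEnd hx
  obtain ⟨y, hy⟩ : ∃ y : Fin n, (y : ℕ) = runEnd (cover k J p) x :=
    ⟨⟨_, runEnd_lt x⟩, rfl⟩
  have hys := runStart_eq hx (t := y) (by omega) hy.le
  have hye := runEnd_eq hx (t := y) (by omega) hy.le
  obtain ⟨u, w, hc, hwy, hyu⟩ := mem_of_mem_run hx (by omega) hy.le
  have htop : (u J : ℕ) = runEnd (cover k J p) x := by have := hc.le_runEnd hwy; omega
  have := hc.prev_lt
  refine ⟨u, hc.inc, le_antisymm ?_ ?_, htop⟩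
  · by_contra h
    have hz := mem_of_mem_run hx (t := u (J - 1)) (by omega) (by omega)
    have := hB.apply_lt_of_mem_run hJ1 hJk hz (hc.inc (J - 1) J (Nat.zero_le _) (by omega) hJk).1
      (by have := runEnd_eq hx (t := u (J - 1)) (by omega) (by omega); omega)
    exact this.asymm (hc.inc (J - 1) J (Nat.zero_le _) (by omega) hJk).2
  · have := runStart_le_of_Icc (x := y) (l := u (J - 1) + 1) (h := u J) (fun t h₁ h₂ => by
      rcases h₂.lt_or_eq with h₂ | h₂
      · exact Config.mem_cover ⟨hc.inc, by omega, h₂⟩ le_rfl h₂.le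
      · exact hc.mem_cover (by omega) (by omega)) (by omega)
    omega

lemma GapRank.isBlock_nonInv_prev (hU : IsBlock k J p x U) (ht₁ : runStart (cover k J p) x ≤ t)
    (ht₂ : t ≤ runEnd (cover k J p) x) : NonInv p (U (J - 1)) t := by
  rcases ht₂.lt_or_eq with ht₂ | ht₂
  · exact hB.nonInv_prev hJk (hU.config ht₁ ht₂)
  · rw [show t = U J by have := hU.top; omega]
    exact hU.inc (J - 1) J (Nat.zero_le _) (by omega) hJk

omit hJ1 in
lemma GapRank.isBlock_nonInv_next (hU : IsBlock k J p x U) (ht₁ : runStart (cover k J p) x ≤ t)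
    (ht₂ : t ≤ runEnd (cover k J p) x) (hJi : J < i) (hik : i < k) : NonInv p t (U i) := by
  rcases ht₂.lt_or_eq with ht₂ | ht₂
  · exact hB.nonInv_next hJk (hU.config ht₁ ht₂) hJi hik
  · rw [show t = U J by have := hU.top; omega]
    exact hU.inc J i (Nat.zero_le _) hJi hik

lemma GapRank.not_apply_lt_of_lt_runStart (hx : x ∈ cover k J p)
    (hy₁ : runStart (cover k J p) x ≤ y) (hy₂ : y ≤ runEnd (cover k J p) x)
    (hH : IncOn p H 0 J) (hH₁ : (H (J - 1) : ℕ) + 1 < runStart (cover k J p) x) :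
    ¬ p (H (J - 1)) < p y := fun hlt => by
  obtain ⟨U, hU⟩ := hB.exists_isBlock hJ1 hJk hx
  have := hU.prev_add_one; have := hU.top
  -- `H`, then `y`, then the top of the block: the entry `U (J - 1)` becomes a gap entry below `y`.
  have hgap := hB.apply_lt_of_insert hJ1 hJk (g := U (J - 1)) hH
    (hU.inc.mono (Nat.zero_le _) le_rfl) ⟨by omega, hlt⟩
    (hB.isBlock_nonInv_next hJk hU hy₁ hy₂ (by omega)) (by omega) (by omega)
  exact hgap.asymm (hB.isBlock_nonInv_prev hJ1 hJk hU hy₁ hy₂).2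

end Cover

section Reversal

variable {p : Equiv.Perm (Fin n)} {v : ℕ → Fin n} {w x y t : Fin n} {k J : ℕ}

noncomputable def mirrorPerm (S : Set (Fin n)) : Equiv.Perm (Fin n) :=
  Function.Involutive.toPerm (mirror S) mirror_mirror

noncomputable def reverseRuns (k J : ℕ) (p : Equiv.Perm (Fin n)) : Equiv.Perm (Fin n) :=
  p * mirrorPerm (cover k J p)

lemma reverseRuns_apply (x : Fin n) : reverseRuns k J p x = p (mirror (cover k J p) x) := rfl

lemma reverseRuns_apply_mirror (x : Fin n) : reverseRuns k J p (mirror (cover k J p) x) = p x := by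
  rw [reverseRuns_apply, mirror_mirror]

lemma reverseRuns_apply_of_not_mem (hx : x ∉ cover k J p) : reverseRuns k J p x = p x := by
  rw [reverseRuns_apply, mirror_of_not_mem hx]

lemma reverseRuns_mul_mirrorPerm : reverseRuns k J p * mirrorPerm (cover k J p) = p :=
  Equiv.ext fun x => congrArg p (mirror_mirror x)

lemma NonInv.mirror_of_reverseRuns (h : NonInv (reverseRuns k J p) x y)
    (hxy : x ∈ cover k J p → runEnd (cover k J p) x < y) :
    NonInv p (mirror (cover k J p) x) (mirror (cover k J p) y) :=
  ⟨mirror_lt_mirror h.1 hxy, h.2⟩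

lemma NonInv.reverseRuns_mirror (h : NonInv p x y)
    (hxy : x ∈ cover k J p → runEnd (cover k J p) x < y) :
    NonInv (reverseRuns k J p) (mirror (cover k J p) x) (mirror (cover k J p) y) :=
  ⟨mirror_lt_mirror h.1 hxy, by simpa only [reverseRuns_apply_mirror] using h.2⟩

variable (hJ1 : 1 ≤ J) (hJk : J < k) (hB : GapRank k J p (J + 1))
include hJ1 hJk hB

lemma GapRank.reverseRuns_lt_of_mem_run (hx : x ∈ cover k J p) (hxy : x < y)
    (hy : y ≤ runEnd (cover k J p) x) : reverseRuns k J p x < reverseRuns k J p y := by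
  have := runStart_le hx
  have hy' : y ∈ cover k J p := mem_of_mem_run hx (by omega) hy
  rw [reverseRuns_apply, reverseRuns_apply]
  refine hB.apply_lt_of_mem_run hJ1 hJk (mirror_mem hy') (mirror_lt_mirror_of_mem_run hx hxy hy) ?_
  rw [runEnd_mirror hy', runEnd_eq hx (by omega) hy]
  exact mirror_le_runEnd hx

lemma GapRank.runEnd_lt_of_nonInv (hx : x ∈ cover k J p) (h : NonInv p x y) :
    runEnd (cover k J p) x < y := by
  by_contra h'
  exact (hB.apply_lt_of_mem_run hJ1 hJk hx h.1 (by omega)).asymm h.2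

-- Mirroring keeps the order up to the first entry lying in the cover; from there on the upper
-- part of the block of that entry's run continues the sequence.
lemma GapRank.exists_tail (hv : IncOn (reverseRuns k J p) v J k) :
    ∃ T, IncOn p T J k ∧ T J = mirror (cover k J p) (v J) := by
  by_cases h : ∃ m, J ≤ m ∧ m < k ∧ v m ∈ cover k J p
  · obtain ⟨hJi, hik, hvD⟩ := Nat.find_spec h
    have hmin : ∀ m, J ≤ m → m < Nat.find h → v m ∉ cover k J p :=
      fun m h₁ h₂ hm => Nat.find_min h h₂ ⟨h₁, by omega, hm⟩
    obtain ⟨U, hU⟩ := hB.exists_isBlock hJ1 hJk hvD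
    refine ⟨fun m => if m < Nat.find h + 1 then mirror (cover k J p) (v m) else U m,
      IncOn.splice (fun m m' h₁ h₂ h₃ => ?_) (hU.inc.mono (Nat.zero_le _) le_rfl)
        fun _ h₂ => ?_,
      by simp [Nat.lt_add_one_iff.mpr hJi]⟩
    · exact (hv m m' h₁ h₂ (by omega)).mirror_of_reverseRuns
        fun hm => absurd hm (hmin m h₁ (by omega))
    · simpa using hB.isBlock_nonInv_next hJk hU (runStart_le_mirror hvD) (mirror_le_runEnd hvD)
        (by omega) h₂
  · refine ⟨fun m => mirror (cover k J p) (v m), fun m m' h₁ h₂ h₃ => ?_, rfl⟩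
    exact (hv m m' h₁ h₂ h₃).mirror_of_reverseRuns
      fun hm => absurd ⟨m, h₁, by omega, hm⟩ h

lemma GapRank.exists_head {E : ℕ} (hE : E < J) (hv : IncOn (reverseRuns k J p) v 0 (E + 1)) :
    ∃ H, IncOn p H 0 (E + 1) ∧ H E = mirror (cover k J p) (v E) := by
  by_cases h : ∃ m ≤ E, v m ∈ cover k J p
  · obtain ⟨m, hmE, hm⟩ := h
    set i₁ := Nat.findGreatest (fun m => v m ∈ cover k J p) E
    have hi₁E : i₁ ≤ E := Nat.findGreatest_le E
    have hvD : v i₁ ∈ cover k J p :=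
      Nat.findGreatest_spec (P := fun m => v m ∈ cover k J p) hmE hm
    have hmax : ∀ m, i₁ < m → m ≤ E → v m ∉ cover k J p :=
      fun m h₁ h₂ => Nat.findGreatest_is_greatest h₁ h₂
    obtain ⟨U, hU⟩ := hB.exists_isBlock hJ1 hJk hvD
    refine ⟨fun m => if m < i₁ then U m else mirror (cover k J p) (v m),
      IncOn.splice (hU.inc.mono le_rfl (by omega)) (fun m m' h₁ h₂ h₃ => ?_) fun h₁ _ => ?_,
      by simp [show ¬ E < i₁ by omega]⟩
    · exact (hv m m' (Nat.zero_le _) h₂ h₃).mirror_of_reverseRuns fun hm =>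
        runEnd_lt_of_not_mem hm (hv m m' (Nat.zero_le _) h₂ h₃).1.le
          (hmax m' (by omega) (by omega))
    · have hle := hU.inc.le (Nat.zero_le _) (show i₁ - 1 ≤ J - 1 by omega) (by omega)
      have := hB.isBlock_nonInv_prev hJ1 hJk hU (runStart_le_mirror hvD) (mirror_le_runEnd hvD)
      exact ⟨hle.1.trans_lt this.1, hle.2.trans_lt this.2⟩
  · refine ⟨fun m => mirror (cover k J p) (v m), fun m m' h₁ h₂ h₃ => ?_, rfl⟩
    exact (hv m m' h₁ h₂ h₃).mirror_of_reverseRuns fun hm => absurd ⟨m, by omega, hm⟩ h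

lemma GapRank.exists_head_before (hc : Config k J (reverseRuns k J p) v w) :
    ∃ H, IncOn p H 0 J ∧ H (J - 1) < mirror (cover k J p) w ∧
      p (H (J - 1)) ≤ reverseRuns k J p (v (J - 1)) := by
  have := hc.prev_lt
  by_cases hrun : w ∈ cover k J p ∧ runStart (cover k J p) w ≤ v (J - 1)
  · obtain ⟨hw, hle⟩ := hrun
    obtain ⟨U, hU⟩ := hB.exists_isBlock hJ1 hJk hw
    have := hU.prev_add_one; have := runStart_le_mirror hw; have := le_runEnd hw
    have hv : v (J - 1) ∈ cover k J p := mem_of_mem_run hw hle (by omega)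
    have := runStart_eq hw hle (by omega); have := runEnd_eq hw hle (by omega)
    have := runStart_le_mirror hv; have := mirror_le_runEnd hv
    exact ⟨U, hU.inc.mono le_rfl hJk.le, by omega,
      (hB.isBlock_nonInv_prev hJ1 hJk hU (t := mirror (cover k J p) (v (J - 1)))
        (by omega) (by omega)).2.le⟩
  · obtain ⟨H, hH, hHE⟩ := hB.exists_head hJ1 hJk (E := J - 1) (by omega)
      (hc.inc.mono le_rfl (by omega))
    rw [Nat.sub_add_cancel hJ1] at hH
    refine ⟨H, hH, hHE ▸ mirror_lt_mirror hc.prev_lt fun hv => ?_, hHE ▸ le_rfl⟩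
    by_contra h
    have := runStart_le hv
    exact hrun ⟨mem_of_mem_run hv (by omega) (by omega),
      by rw [runStart_eq hv (by omega) (by omega)]; exact runStart_le hv⟩

-- Were `v J` outside the run of `w`, a head, `mirror w` and the mirrored tail would form a
-- configuration of `p` whose span leaves that run.
lemma GapRank.config_reverseRuns_mem_run (hc : Config k J (reverseRuns k J p) v w) :
    w ∈ cover k J p ∧ (v J : ℕ) ≤ runEnd (cover k J p) w := by
  by_contra hcon
  have hsep : w ∈ cover k J p → runEnd (cover k J p) w < v J :=
    fun hw => by by_contra h; exact hcon ⟨hw, by omega⟩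
  obtain ⟨H, hH, hH₁, hH₂⟩ := hB.exists_head_before hJ1 hJk hc
  obtain ⟨T, hT, hTJ⟩ := hB.exists_tail hJ1 hJk (hc.inc.mono (Nat.zero_le _) le_rfl)
  have hgap : mirror (cover k J p) w < T J := hTJ ▸ mirror_lt_mirror hc.lt_top hsep
  have hval : p (H (J - 1)) < p (T J) :=
    hH₂.trans_lt (hTJ ▸ (hc.inc (J - 1) J (Nat.zero_le _) (by omega) hJk).2)
  have hc' : Config k J p (fun i => if i < J then H i else T i) (mirror (cover k J p) w) :=
    ⟨hH.splice hT fun _ _ => ⟨hH₁.trans hgap, hval⟩,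
      by simpa [show J - 1 < J by omega] using hH₁, by simpa using hgap⟩
  have hw : w ∈ cover k J p := mirror_mem_iff.mp (hc'.mem_cover le_rfl (by simpa using hgap.le))
  have h₁ := hc'.le_runEnd le_rfl
  simp only [lt_irrefl, if_false] at h₁
  rw [runEnd_mirror hw, hTJ] at h₁
  have := runEnd_lt_mirror hw (hsep hw)
  omega

lemma GapRank.reverseRuns_prev_lt (hc : Config k J (reverseRuns k J p) v w) :
    reverseRuns k J p (v (J - 1)) < reverseRuns k J p w := by
  obtain ⟨hw, hvJ⟩ := hB.config_reverseRuns_mem_run hJ1 hJk hc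
  have := runStart_le hw; have := hc.prev_lt; have := hc.lt_top
  by_cases hin : runStart (cover k J p) w ≤ v (J - 1)
  · exact hB.reverseRuns_lt_of_mem_run hJ1 hJk (mem_of_mem_run hw hin (by omega)) hc.prev_lt
      (by rw [runEnd_eq hw hin (by omega)]; exact le_runEnd hw)
  obtain ⟨H, hH, hHE⟩ := hB.exists_head hJ1 hJk (E := J - 1) (by omega)
    (hc.inc.mono le_rfl (by omega))
  rw [Nat.sub_add_cancel hJ1] at hH
  have hlt := mirror_lt_runStart hw (x := v (J - 1)) (by omega)
  have hvJD : v J ∈ cover k J p := mem_of_mem_run hw (by omega) hvJ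
  have := runStart_eq hw (t := v J) (by omega) hvJ; have := runEnd_eq hw (t := v J) (by omega) hvJ
  have := runStart_le_mirror hvJD; have := mirror_le_runEnd hvJD
  rcases (show (mirror (cover k J p) (v (J - 1)) : ℕ) + 1 ≤ runStart (cover k J p) w by
    omega).lt_or_eq with h | h
  · rw [← hHE] at h
    refine absurd ?_ (hB.not_apply_lt_of_lt_runStart hJ1 hJk hw
      (y := mirror (cover k J p) (v J)) (by omega) (by omega) hH h)
    rw [hHE]
    exact (hc.inc (J - 1) J (Nat.zero_le _) (by omega) hJk).2
  · have hv : v (J - 1) ∉ cover k J p :=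
      fun h' => not_mem_of_add_one_eq_runStart hw h (mirror_mem h')
    obtain ⟨U, hU⟩ := hB.exists_isBlock hJ1 hJk hw
    rw [mirror_of_not_mem hv] at h
    rw [reverseRuns_apply_of_not_mem hv,
      show v (J - 1) = U (J - 1) by have := hU.prev_add_one; omega]
    exact (hB.isBlock_nonInv_prev hJ1 hJk hU (runStart_le_mirror hw) (mirror_le_runEnd hw)).2

lemma GapRank.gapRank_reverseRuns : GapRank k J (reverseRuns k J p) J := fun _ _ hc =>
  have hrun := hB.config_reverseRuns_mem_run hJ1 hJk hc
  rankIs_of_bounds hc hJ1 hJk (hB.reverseRuns_prev_lt hJ1 hJk hc)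
    (hB.reverseRuns_lt_of_mem_run hJ1 hJk hrun.1 hc.lt_top hrun.2)

lemma GapRank.incOn_reverseRuns_mirror {U : ℕ → Fin n} (hU : IncOn p U 0 k) :
    IncOn (reverseRuns k J p) (fun i => mirror (cover k J p) (U i)) 0 k :=
  fun i i' _ h₁ h₂ => (hU i i' (Nat.zero_le _) h₁ h₂).reverseRuns_mirror
    fun hi => hB.runEnd_lt_of_nonInv hJ1 hJk hi (hU i i' (Nat.zero_le _) h₁ h₂)

-- The mirrored block, with its top kept at the end of the run and gap entry at its start,
-- is a configuration of the reversal spanning the whole run of `t`.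
lemma GapRank.mem_cover_reverseRuns (ht : t ∈ cover k J p) :
    t ∈ cover k J (reverseRuns k J p) := by
  obtain ⟨U, hU⟩ := hB.exists_isBlock hJ1 hJk ht
  have hlt := runStart_lt_runEnd ht; have := hU.prev_add_one; have := hU.top
  have := runStart_le ht; have := le_runEnd ht
  obtain ⟨a, ha⟩ : ∃ a : Fin n, (a : ℕ) = runStart (cover k J p) t :=
    ⟨⟨runStart (cover k J p) t, by omega⟩, rfl⟩
  have hmirUJ : mirror (cover k J p) (U J) = a :=
    Fin.ext (by rw [val_mirror_of_eq_runEnd ht hU.top, ha])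
  have hprev : U (J - 1) ∉ cover k J p := not_mem_of_add_one_eq_runStart ht hU.prev_add_one
  have hmU := hB.incOn_reverseRuns_mirror hJ1 hJk hU.inc
  have hna := hB.isBlock_nonInv_prev hJ1 hJk hU (t := a) (by omega) (by omega)
  have hc : Config k J (reverseRuns k J p) (fun i => if i < J then mirror (cover k J p) (U i)
      else if i = J then U J else mirror (cover k J p) (U i)) a := by
    refine ⟨(hmU.mono le_rfl hJk.le).insert (hmU.mono (Nat.zero_le _) le_rfl) (fun _ => ?_)
      fun h => ?_, ?_, by simpa using (show a < U J by omega)⟩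
    · rw [mirror_of_not_mem hprev]
      refine ⟨by omega, ?_⟩
      rw [reverseRuns_apply_of_not_mem hprev, reverseRuns_apply, hmirUJ]
      exact hna.2
    · have hnb := hB.isBlock_nonInv_next hJk hU (t := a) (by omega) (by omega) (by omega) h
      refine ⟨?_, by rw [reverseRuns_apply, hmirUJ, reverseRuns_apply_mirror]; exact hnb.2⟩
      have := runEnd_lt_mirror ht (y := U (J + 1))
        (by have := (hU.inc J (J + 1) (Nat.zero_le _) (by omega) h).1; omega)
      omega
    · simpa [show J - 1 < J by omega, mirror_of_not_mem hprev]
        using (show U (J - 1) < a by omega)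
  exact hc.mem_cover (by omega) (by simpa using (show t ≤ U J by omega))

lemma GapRank.cover_reverseRuns : cover k J (reverseRuns k J p) = cover k J p := by
  ext t
  refine ⟨fun ⟨v, w, hc, h₁, h₂⟩ => ?_, hB.mem_cover_reverseRuns hJ1 hJk⟩
  obtain ⟨hw, hvJ⟩ := hB.config_reverseRuns_mem_run hJ1 hJk hc
  exact mem_of_mem_run hw (by have := runStart_le hw; omega) (by omega)

end Reversal

lemma reverseRuns_injOn {k J : ℕ} (hJ1 : 1 ≤ J) (hJk : J < k) :
    Set.InjOn (reverseRuns k J) {p : Equiv.Perm (Fin n) | GapRank k J p (J + 1)} := by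
  intro p₁ hp₁ p₂ hp₂ h
  have hD : cover k J p₁ = cover k J p₂ := by
    rw [← GapRank.cover_reverseRuns hJ1 hJk hp₁, ← GapRank.cover_reverseRuns hJ1 hJk hp₂, h]
  rw [← reverseRuns_mul_mirrorPerm (p := p₁), ← reverseRuns_mul_mirrorPerm (p := p₂), h, hD]

end AlmostDistant

theorem stmt11_general (k j n : ℕ) (hj1 : 2 ≤ j) (hj2 : j ≤ k) :
    (Av n (MSet k j (j + 1))).ncard ≤ (Av n (MSet k j j)).ncard := by
  obtain ⟨J, rfl⟩ : ∃ J, j = J + 1 := ⟨j - 1, by omega⟩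
  have hJ1 : 1 ≤ J := by omega
  have hJk : J < k := by omega
  have hsrc : ∀ p, p ∈ Av n (MSet k (J + 1) (J + 1 + 1)) ↔
      AlmostDistant.GapRank k J p (J + 1) :=
    fun p => AlmostDistant.mem_Av_MSet_iff hJ1 hJk (by omega) (by omega)
  have htgt : ∀ p, p ∈ Av n (MSet k (J + 1) (J + 1)) ↔ AlmostDistant.GapRank k J p J :=
    fun p => AlmostDistant.mem_Av_MSet_iff hJ1 hJk (by omega) (by omega)
  refine Set.ncard_le_ncard_of_injOn (AlmostDistant.reverseRuns k J)
    (fun p hp => (htgt _).mpr (((hsrc p).mp hp).gapRank_reverseRuns hJ1 hJk)) ?_ (Set.toFinite _)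
  exact (AlmostDistant.reverseRuns_injOn hJ1 hJk).mono fun p hp => (hsrc p).mp hp

/-- `|Av_n(M_{k,j,j+1})| ≤ |Av_n(M_{k,j,j})|`. -/
theorem stmt11 (k j n : ℕ) (hk : 2 ≤ k) (hj1 : 2 ≤ j) (hj2 : j ≤ k) (hn : 1 ≤ n) :
    (Av n (MSet k j (j + 1))).ncard ≤ (Av n (MSet k j j)).ncard :=
  stmt11_general k j n hj1 hj2
end
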